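/- For all φ, ψ ∈ L_PAPAL: (1) □⁺(φ∧ψ) ↔ (□⁺φ ∧ □⁺ψ) is valid on S5; (2) if φ is valid on S5 then □⁺φ is valid on S5; (3) □⁺φ → φ is valid на S5; (4) for every agent a, K_a □⁺φ → □⁺ K_a φ is valid on S5. -/

import Mathlib

/-- An epistemic (S5) model: a nonempty set of states, an equivalence
relation for each agent, and a valuation of atoms. -/
structure EpiModel (A P : Type) where
  S : Type
  ne : Nonempty S
  rel : A → S → S → Prop
  equiv : ∀ a, Equivalence (rel a)
  val : P → Set S

/-- Positive formulas L_EL⁺ : p | ¬p | ∧ | ∨ | K_a. -/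
inductive PosForm (A P : Type) where
  | atom : P → PosForm A P
  | natom : P → PosForm A P
  | and : PosForm A P → PosForm A P → PosForm A P
  | or : PosForm A P → PosForm A P → PosForm A P
  | know : A → PosForm A P → PosForm A P

/-- Satisfaction of a positive formula, relativized to a current domain `D`
(representing the submodel of `M` induced by `D`). -/
def PosForm.sat {A P : Type} (M : EpiModel A P) : PosForm A P → Set M.S → M.S → Prop
  | .atom p, _, s => s ∈ M.val p
  | .natom p, _, s => s ∉ M.val p
  | .and φ ψ, D, s => PosForm.sat M φ D s ∧ PosForm.sat M ψ D s
  | .or φ ψ, D, s => PosForm.sat M φ D s ∨ PosForm.sat M ψ D s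
  | .know a φ, D, s => ∀ t, M.rel a s t → t ∈ D → PosForm.sat M φ D t

/-- The language L_PAPAL : atoms, ¬, ∧, K_a, announcements [ψ]φ and the
positive arbitrary-announcement quantifier □⁺. -/
inductive Form (A P : Type) where
  | atom : P → Form A P
  | neg : Form A P → Form A P
  | and : Form A P → Form A P → Form A P
  | know : A → Form A P → Form A P
  | ann : Form A P → Form A P → Form A P
  | pbox : Form A P → Form A P

/-- Satisfaction, relativized to a current domain `D`: `Form.sat M φ D s`
means that φ holds at state `s` of the restriction of `M` to `D`.
Announcement `[ψ]φ` further restricts the domain to the states of `D`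
satisfying ψ; `□⁺φ` quantifies over announcements of positive formulas. -/
def Form.sat {A P : Type} (M : EpiModel A P) : Form A P → Set M.S → M.S → Prop
  | .atom p, _, s => s ∈ M.val p
  | .neg φ, D, s => ¬ Form.sat M φ D s
  | .and φ ψ, D, s => Form.sat M φ D s ∧ Form.sat M ψ D s
  | .know a φ, D, s => ∀ t, M.rel a s t → t ∈ D → Form.sat M φ D t
  | .ann ψ φ, D, s => Form.sat M ψ D s → Form.sat M φ {t | t ∈ D ∧ Form.sat M ψ D t} s
  | .pbox φ, D, s => ∀ χ : PosForm A P, PosForm.sat M χ D s →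
      Form.sat M φ {t | t ∈ D ∧ PosForm.sat M χ D t} s

/-- Truth at a pointed model `M_s`. -/
def Sat {A P : Type} (M : EpiModel A P) (s : M.S) (φ : Form A P) : Prop :=
  Form.sat M φ Set.univ s

def Form.or {A P : Type} (φ ψ : Form A P) : Form A P := .neg (.and (.neg φ) (.neg ψ))
def Form.imp {A P : Type} (φ ψ : Form A P) : Form A P := Form.or (.neg φ) ψ
def Form.iff {A P : Type} (φ ψ : Form A P) : Form A P := .and (Form.imp φ ψ) (Form.imp ψ φ)
def Form.pdia {A P : Type} (φ : Form A P) : Form A P := .neg (.pbox (.neg φ))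
def Form.lknow {A P : Type} (a : A) (φ : Form A P) : Form A P := .neg (.know a (.neg φ))

/-- Validity on the class S5 of all epistemic models. -/
def Valid (A P : Type) (φ : Form A P) : Prop :=
  ∀ (M : EpiModel A P) (s : M.S), Sat M s φ

/-!
Items (1), (3) and (4) hold in every submodel, not just the full model: □⁺ distributes over `∧`
because it is a universal quantifier, announcing the tautology `p ∨ ¬p` leaves the domain
unchanged, and a state `K_a`-related to `s` inside an announced submodel is `K_a`-related to `s`
in the original domain. For necessitation (2), a submodel is turned into an epistemic model of its
own; truth in the submodel agrees with truth in that model, where a valid `φ` holds.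
-/

variable {A P : Type}

def EpiModel.restrict (M : EpiModel A P) (D : Set M.S) (hD : D.Nonempty) : EpiModel A P where
  S := D
  ne := hD.to_subtype
  rel a x y := M.rel a x y
  equiv a := (M.equiv a).comap Subtype.val
  val p := Subtype.val ⁻¹' M.val p

section Restrict

variable (M : EpiModel A P) {D : Set M.S} (hD : D.Nonempty)

theorem EpiModel.forall_rel_restrict_iff {a : A} {E : Set M.S} (hE : E ⊆ D) {s : D}
    {Q' : D → Prop} {Q : M.S → Prop} (hQ : ∀ t : D, Q' t ↔ Q t) :
    (∀ t : D, (M.restrict D hD).rel a s t → t ∈ Subtype.val ⁻¹' E → Q' t) ↔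
      ∀ t, M.rel a s t → t ∈ E → Q t :=
  ⟨fun h t hst htE => (hQ ⟨t, hE htE⟩).1 (h ⟨t, hE htE⟩ hst htE),
    fun h t hst htE => (hQ t).2 (h t hst htE)⟩

theorem PosForm.sat_restrict (χ : PosForm A P) {E : Set M.S} (hE : E ⊆ D) (s : D) :
    PosForm.sat (M.restrict D hD) χ (Subtype.val ⁻¹' E) s ↔ PosForm.sat M χ E s := by
  induction χ generalizing s with
  | atom p => rfl
  | natom p => rfl
  | and χ θ ihχ ihθ => exact and_congr (ihχ s) (ihθ s)
  | or χ θ ihχ ihθ => exact or_congr (ihχ s) (ihθ s)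
  | know a χ ih => exact M.forall_rel_restrict_iff hD hE ih

theorem Form.sat_restrict (φ : Form A P) {E : Set M.S} (hE : E ⊆ D) (s : D) :
    Form.sat (M.restrict D hD) φ (Subtype.val ⁻¹' E) s ↔ Form.sat M φ E s := by
  induction φ generalizing E s with
  | atom p => rfl
  | neg φ ih => exact not_congr (ih hE s)
  | and φ ψ ihφ ihψ => exact and_congr (ihφ hE s) (ihψ hE s)
  | know a φ ih => exact M.forall_rel_restrict_iff hD hE (ih hE)
  | ann ψ φ ihψ ihφ =>
    have hset : {t | t ∈ Subtype.val ⁻¹' E ∧ Form.sat (M.restrict D hD) ψ (Subtype.val ⁻¹' E) t}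
        = Subtype.val ⁻¹' {t | t ∈ E ∧ Form.sat M ψ E t} :=
      Set.ext fun t => and_congr_right fun _ => ihψ hE t
    exact imp_congr (ihψ hE s)
      ((congrArg (Form.sat (M.restrict D hD) φ · s) hset).to_iff.trans
        (ihφ (E := {t | t ∈ E ∧ Form.sat M ψ E t}) (fun t ht => hE ht.1) s))
  | pbox φ ih =>
    have hset (χ : PosForm A P) :
        {t | t ∈ Subtype.val ⁻¹' E ∧ PosForm.sat (M.restrict D hD) χ (Subtype.val ⁻¹' E) t}
          = Subtype.val ⁻¹' {t | t ∈ E ∧ PosForm.sat M χ E t} :=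
      Set.ext fun t => and_congr_right fun _ => χ.sat_restrict M hD hE t
    exact forall_congr' fun χ => imp_congr (χ.sat_restrict M hD hE s)
      ((congrArg (Form.sat (M.restrict D hD) φ · s) (hset χ)).to_iff.trans
        (ih (E := {t | t ∈ E ∧ PosForm.sat M χ E t}) (fun t ht => hE ht.1) s))

end Restrict

theorem Valid.sat_of_mem {φ : Form A P} (hφ : Valid A P φ) (M : EpiModel A P) {D : Set M.S}
    {s : M.S} (hs : s ∈ D) : Form.sat M φ D s := by
  have h : Form.sat (M.restrict D ⟨s, hs⟩) φ (Subtype.val ⁻¹' D) ⟨s, hs⟩ :=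
    (congrArg (Form.sat (M.restrict D ⟨s, hs⟩) φ · ⟨s, hs⟩) (Subtype.coe_preimage_self D)).mpr
      (hφ _ _)
  exact (φ.sat_restrict M ⟨s, hs⟩ subset_rfl ⟨s, hs⟩).1 h

theorem Valid.pbox {φ : Form A P} (hφ : Valid A P φ) : Valid A P (.pbox φ) :=
  fun M _ _ hχ => hφ.sat_of_mem M ⟨trivial, hχ⟩

section Semantics

variable {M : EpiModel A P} {D : Set M.S} {s : M.S}

@[simp]
theorem Form.sat_imp {φ ψ : Form A P} :
    Form.sat M (φ.imp ψ) D s ↔ (Form.sat M φ D s → Form.sat M ψ D s) := by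
  simp only [Form.imp, Form.or, Form.sat, not_not]
  tauto

@[simp]
theorem Form.sat_iff {φ ψ : Form A P} :
    Form.sat M (φ.iff ψ) D s ↔ (Form.sat M φ D s ↔ Form.sat M ψ D s) := by
  simp only [Form.iff, Form.sat, Form.sat_imp]
  exact iff_iff_implies_and_implies.symm

theorem Form.sat_pbox_and {φ ψ : Form A P} :
    Form.sat M (.pbox (.and φ ψ)) D s ↔
      Form.sat M (.pbox φ) D s ∧ Form.sat M (.pbox ψ) D s :=
  (forall_congr' fun _ => imp_and).trans forall_and

theorem Form.nonempty_atom : Form A P → Nonempty P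
  | .atom p => ⟨p⟩
  | .neg φ | .and φ _ | .know _ φ | .ann φ _ | .pbox φ => φ.nonempty_atom

theorem PosForm.sat_atom_or_natom (p : P) :
    PosForm.sat M (.or (.atom p) (.natom p)) D s :=
  em _

theorem Form.sat_of_sat_pbox {φ : Form A P} (h : Form.sat M (.pbox φ) D s) :
    Form.sat M φ D s := by
  -- Without atoms there are no positive formulas to announce; `φ` itself supplies one.
  obtain ⟨p⟩ := φ.nonempty_atom
  have hφ := h _ (PosForm.sat_atom_or_natom p)
  have hD : {t | t ∈ D ∧ PosForm.sat M (.or (.atom p) (.natom p)) D t} = D :=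
    Set.sep_eq_self_iff_mem_true.2 fun _ _ => PosForm.sat_atom_or_natom p
  rwa [hD] at hφ

theorem Form.sat_pbox_know_of_sat_know_pbox {a : A} {φ : Form A P}
    (h : Form.sat M (.know a (.pbox φ)) D s) : Form.sat M (.pbox (.know a φ)) D s :=
  fun χ _ t hst ht => h t hst ht.1 χ ht.2

end Semantics

/-- For all φ, ψ ∈ L_PAPAL:
(1) `□⁺(φ∧ψ) ↔ (□⁺φ ∧ □⁺ψ)` is valid on S5;
(2) if φ is valid on S5 then `□⁺φ` is valid on S5;
(3) `□⁺φ → φ` is valid on S5;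
(4) for every agent `a`, `K_a □⁺φ → □⁺ K_a φ` is valid on S5. -/
theorem pbox_basic_validities (A P : Type) :
    (∀ φ ψ : Form A P,
      Valid A P (Form.iff (.pbox (.and φ ψ)) (.and (.pbox φ) (.pbox ψ)))) ∧
    (∀ φ : Form A P, Valid A P φ → Valid A P (.pbox φ)) ∧
    (∀ φ : Form A P, Valid A P (Form.imp (.pbox φ) φ)) ∧
    (∀ (a : A) (φ : Form A P),
      Valid A P (Form.imp (.know a (.pbox φ)) (.pbox (.know a φ)))) :=
  ⟨fun _ _ _ _ => Form.sat_iff.2 Form.sat_pbox_and,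
    fun _ hφ => hφ.pbox,
    fun _ _ _ => Form.sat_imp.2 Form.sat_of_sat_pbox,
    fun _ _ _ _ => Form.sat_imp.2 Form.sat_pbox_know_of_sat_know_pbox⟩
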